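/- For every H ∈ (0, 1/2), ∫₀^∞ ψ_H(t) dt = 0, where ψ_H(t) = Γ(2H+1) e^{−t} + 2H [ e^{t} ∫_t^∞ e^{−s} s^{2H−1} ds − e^{−t} ∫₀^t e^{s} s^{2H−1} ds ]; that is, I_{1,H} = 0 for all 0 < H < 1/2. -/

import Mathlib

open MeasureTheory Real

/-- `ψ_H(t) = Γ(2H+1) e^{−t} + 2H [e^t ∫_t^∞ e^{−s} s^{2H−1} ds − e^{−t} ∫₀^t e^s s^{2H−1} ds]`. -/
noncomputable def psiH (H t : ℝ) : ℝ :=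
  Real.Gamma (2 * H + 1) * Real.exp (-t) +
    2 * H * (Real.exp t * (∫ s in Set.Ioi t, Real.exp (-s) * s ^ (2 * H - 1)) -
      Real.exp (-t) * ∫ s in (0:ℝ)..t, Real.exp s * s ^ (2 * H - 1))
open Set Filter Topology

/-! With `p = 2H - 1`, put `f t = e^t ∫_t^∞ e^{-s} s^p ds` and `g t = e^{-t} ∫_0^t e^s s^p ds`
(`expTail p` and `expHead p` below), so that `ψ_H = Γ(2H+1) e^{-t} + 2H (f - g)`,
`f' = f - t^p` and `g' = t^p - g`. Hence `G = -Γ(2H+1) e^{-t} + 2H (f + g)` is a primitive of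
`ψ_H`, with `G 0 = -Γ(2H+1) + 2H Γ(2H) = 0`, and `G → 0` at infinity because `f, g → 0` when
`p < 0`.

Integrability of `ψ_H` comes from signs alone: with `P t = ∫_0^t e^{-s} s^p ds`,
`f - g = f' + (g - P)' + e^{-t} t^p`, where `f' ≤ 0` and `(g - P)' = (1 - e^{-t}) t^p - g ≤ 0`
because `s^p` is decreasing, and `f`, `g - P` have limits at infinity. -/

section Exponent

variable {p t : ℝ}

lemma intervalIntegrable_mul_rpow (hp : -1 < p) {φ : ℝ → ℝ} (hφ : Continuous φ) (b : ℝ) :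
    IntervalIntegrable (fun s => φ s * s ^ p) volume 0 b :=
  (intervalIntegral.intervalIntegrable_rpow' hp).continuousOn_mul hφ.continuousOn

lemma hasDerivAt_integral_mul_rpow (hp : -1 < p) {φ : ℝ → ℝ} (hφ : Continuous φ) (ht : 0 < t) :
    HasDerivAt (fun u => ∫ s in 0..u, φ s * s ^ p) (φ t * t ^ p) t := by
  have hcont : ContinuousOn (fun s => φ s * s ^ p) (Ioi 0) := fun s hs =>
    (hφ.continuousAt.mul (continuousAt_rpow_const s p (Or.inl hs.out.ne'))).continuousWithinAt
  exact intervalIntegral.integral_hasDerivAt_right (intervalIntegrable_mul_rpow hp hφ t)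
    (hcont.stronglyMeasurableAtFilter isOpen_Ioi t ht) (hcont.continuousAt (Ioi_mem_nhds ht))

lemma continuousWithinAt_integral_mul_rpow (hp : -1 < p) {φ : ℝ → ℝ} (hφ : Continuous φ) :
    ContinuousWithinAt (fun u => ∫ s in 0..u, φ s * s ^ p) (Ici 0) 0 := by
  have h := intervalIntegral.continuousOn_primitive_interval'
    (intervalIntegrable_mul_rpow hp hφ 1) left_mem_uIcc
  rw [uIcc_of_le zero_le_one] at h
  exact (h 0 (left_mem_Icc.2 zero_le_one)).mono_of_mem_nhdsWithin (Icc_mem_nhdsGE one_pos)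

lemma integrableOn_exp_neg_mul_rpow (hp : -1 < p) :
    IntegrableOn (fun s => exp (-s) * s ^ p) (Ioi 0) := by
  simpa using GammaIntegral_convergent (s := p + 1) (by linarith)

lemma integral_exp_neg_mul_rpow_eq_Gamma (hp : -1 < p) :
    ∫ s in Ioi 0, exp (-s) * s ^ p = Gamma (p + 1) := by
  simpa using (Gamma_eq_integral (s := p + 1) (by linarith)).symm

noncomputable def expTail (p t : ℝ) : ℝ := exp t * ∫ s in Ioi t, exp (-s) * s ^ p

noncomputable def expHead (p t : ℝ) : ℝ := exp (-t) * ∫ s in 0..t, exp s * s ^ p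

lemma expTail_eq (hp : -1 < p) (ht : 0 ≤ t) :
    expTail p t = exp t * (Gamma (p + 1) - ∫ s in 0..t, exp (-s) * s ^ p) := by
  rw [expTail, ← integral_exp_neg_mul_rpow_eq_Gamma hp,
    ← intervalIntegral.integral_Ioi_sub_Ioi (integrableOn_exp_neg_mul_rpow hp) ht, sub_sub_cancel]

lemma expTail_zero (hp : -1 < p) : expTail p 0 = Gamma (p + 1) := by
  rw [expTail, integral_exp_neg_mul_rpow_eq_Gamma hp, exp_zero, one_mul]

lemma hasDerivAt_expTail (hp : -1 < p) (ht : 0 < t) :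
    HasDerivAt (expTail p) (expTail p t - t ^ p) t := by
  have hP := hasDerivAt_integral_mul_rpow hp (φ := fun s => exp (-s)) (by fun_prop) ht
  have h : HasDerivAt (fun u => exp u * (Gamma (p + 1) - ∫ s in 0..u, exp (-s) * s ^ p))
      (exp t * (Gamma (p + 1) - ∫ s in 0..t, exp (-s) * s ^ p) +
        exp t * (0 - exp (-t) * t ^ p)) t :=
    (hasDerivAt_exp t).mul ((hasDerivAt_const t _).sub hP)
  refine (h.congr_of_eventuallyEq ?_).congr_deriv ?_
  · filter_upwards [Ioi_mem_nhds ht] with u hu using expTail_eq hp hu.out.le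
  · rw [expTail_eq hp ht.le, zero_sub, mul_neg, ← mul_assoc, ← exp_add, add_neg_cancel, exp_zero,
      one_mul, ← sub_eq_add_neg]

lemma continuousWithinAt_expTail (hp : -1 < p) : ContinuousWithinAt (expTail p) (Ici 0) 0 := by
  have h := continuous_exp.continuousWithinAt.mul
    ((continuousWithinAt_const (b := Gamma (p + 1))).sub
      (continuousWithinAt_integral_mul_rpow hp (φ := fun s => exp (-s)) (by fun_prop)))
  exact h.congr (fun u hu => expTail_eq hp hu) (expTail_eq hp le_rfl)

lemma expTail_nonneg (ht : 0 ≤ t) : 0 ≤ expTail p t :=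
  mul_nonneg (exp_pos t).le <| setIntegral_nonneg measurableSet_Ioi fun _ hs =>
    mul_nonneg (exp_pos _).le (rpow_nonneg (ht.trans hs.out.le) p)

lemma expTail_le_rpow (hp : -1 < p) (hp0 : p ≤ 0) (ht : 0 < t) : expTail p t ≤ t ^ p := by
  have hmono : ∫ s in Ioi t, exp (-s) * s ^ p ≤ ∫ s in Ioi t, exp (-s) * t ^ p :=
    setIntegral_mono_on ((integrableOn_exp_neg_mul_rpow hp).mono_set (Ioi_subset_Ioi ht.le))
      ((integrableOn_exp_neg_Ioi t).mul_const _) measurableSet_Ioi fun s hs =>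
        mul_le_mul_of_nonneg_left (rpow_le_rpow_of_nonpos ht hs.out.le hp0) (exp_pos _).le
  rw [integral_mul_const, integral_exp_neg_Ioi] at hmono
  calc expTail p t ≤ exp t * (exp (-t) * t ^ p) := mul_le_mul_of_nonneg_left hmono (exp_pos t).le
    _ = t ^ p := by rw [← mul_assoc, ← exp_add, add_neg_cancel, exp_zero, one_mul]

lemma tendsto_expTail (hp : -1 < p) (hp0 : p < 0) : Tendsto (expTail p) atTop (𝓝 0) := by
  refine squeeze_zero' ?_ ?_
    (tendsto_rpow_neg_atTop (neg_pos.2 hp0) |>.congr fun t => by rw [neg_neg])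
  · filter_upwards [eventually_ge_atTop 0] with t ht using expTail_nonneg ht
  · filter_upwards [eventually_gt_atTop 0] with t ht using expTail_le_rpow hp hp0.le ht

lemma expHead_zero : expHead p 0 = 0 := by simp [expHead]

lemma hasDerivAt_expHead (hp : -1 < p) (ht : 0 < t) :
    HasDerivAt (expHead p) (t ^ p - expHead p t) t := by
  have h := (hasDerivAt_neg t).exp.mul (hasDerivAt_integral_mul_rpow hp continuous_exp ht)
  refine h.congr_deriv ?_
  have he : exp (-t) * exp t = 1 := by rw [← exp_add, neg_add_cancel, exp_zero]
  rw [expHead]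
  linear_combination t ^ p * he

lemma continuousWithinAt_expHead (hp : -1 < p) : ContinuousWithinAt (expHead p) (Ici 0) 0 :=
  (continuous_exp.comp continuous_neg).continuousWithinAt.mul
    (continuousWithinAt_integral_mul_rpow hp continuous_exp)

lemma one_sub_exp_neg_mul_rpow_le_expHead (hp : -1 < p) (hp0 : p ≤ 0) (ht : 0 ≤ t) :
    (1 - exp (-t)) * t ^ p ≤ expHead p t := by
  have hmono : ∫ s in 0..t, exp s * t ^ p ≤ ∫ s in 0..t, exp s * s ^ p :=
    intervalIntegral.integral_mono_on_of_le_Ioo ht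
      (continuous_exp.intervalIntegrable 0 t |>.mul_const _)
      (intervalIntegrable_mul_rpow hp continuous_exp t) fun s hs =>
        mul_le_mul_of_nonneg_left (rpow_le_rpow_of_nonpos hs.1 hs.2.le hp0) (exp_pos s).le
  rw [intervalIntegral.integral_mul_const, integral_exp, exp_zero] at hmono
  calc (1 - exp (-t)) * t ^ p = exp (-t) * ((exp t - 1) * t ^ p) := by
        rw [← mul_assoc, mul_sub, ← exp_add, neg_add_cancel, exp_zero, mul_one]
    _ ≤ expHead p t := mul_le_mul_of_nonneg_left hmono (exp_pos _).le

lemma expHead_le (hp : -1 < p) (hp0 : p ≤ 0) (ht : 0 < t) :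
    expHead p t ≤ t ^ (p + 1) * exp (-(1 / 2) * t) / (p + 1) + (t / 2) ^ p := by
  have hmono : ∫ s in 0..t, exp s * s ^ p ≤
      ∫ s in 0..t, (exp (t / 2) * s ^ p + exp s * (t / 2) ^ p) := by
    refine intervalIntegral.integral_mono_on_of_le_Ioo ht.le
      (intervalIntegrable_mul_rpow hp continuous_exp t)
      ((intervalIntegrable_mul_rpow hp continuous_const t).add
        (continuous_exp.intervalIntegrable 0 t |>.mul_const _)) fun s hs => ?_
    have hsp : 0 ≤ s ^ p := rpow_nonneg hs.1.le p
    rcases le_or_gt s (t / 2) with hs2 | hs2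
    · have := mul_le_mul_of_nonneg_right (exp_le_exp.2 hs2) hsp
      nlinarith [exp_pos s, rpow_nonneg (half_pos ht).le p]
    · have := mul_le_mul_of_nonneg_left (rpow_le_rpow_of_nonpos (half_pos ht) hs2.le hp0)
        (exp_pos s).le
      nlinarith [exp_pos (t / 2)]
  rw [intervalIntegral.integral_add (intervalIntegrable_mul_rpow hp continuous_const t)
      (continuous_exp.intervalIntegrable 0 t |>.mul_const _), intervalIntegral.integral_const_mul,
    intervalIntegral.integral_mul_const, integral_rpow (Or.inl hp), integral_exp,
    zero_rpow (by linarith), sub_zero] at hmono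
  calc expHead p t
      ≤ exp (-t) * (exp (t / 2) * (t ^ (p + 1) / (p + 1)) + (exp t - exp 0) * (t / 2) ^ p) :=
        mul_le_mul_of_nonneg_left hmono (exp_pos _).le
    _ = t ^ (p + 1) * exp (-(1 / 2) * t) / (p + 1) + (t / 2) ^ p - exp (-t) * (t / 2) ^ p := by
        have he : exp (-t) * exp t = 1 := by rw [← exp_add, neg_add_cancel, exp_zero]
        rw [show -(1 / 2) * t = -t + t / 2 by ring, exp_add, exp_zero]
        linear_combination (t / 2) ^ p * he
    _ ≤ _ := sub_le_self _ (mul_nonneg (exp_pos _).le (rpow_nonneg (half_pos ht).le p))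

lemma tendsto_expHead (hp : -1 < p) (hp0 : p < 0) : Tendsto (expHead p) atTop (𝓝 0) := by
  have h₁ := (tendsto_rpow_mul_exp_neg_mul_atTop_nhds_zero (p + 1) (1 / 2) one_half_pos).div_const
    (p + 1)
  have h₂ : Tendsto (fun t : ℝ => (t / 2) ^ p) atTop (𝓝 0) := by
    simpa only [neg_neg, Function.comp_def, id] using
      (tendsto_rpow_neg_atTop (neg_pos.2 hp0)).comp (tendsto_id.atTop_div_const two_pos)
  rw [zero_div] at h₁
  refine squeeze_zero' ?_ ?_ (by simpa only [add_zero] using h₁.add h₂)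
  · filter_upwards [eventually_ge_atTop 0] with t ht
    exact (mul_nonneg (sub_nonneg.2 (exp_le_one_iff.2 (neg_nonpos.2 ht))) (rpow_nonneg ht p)).trans
      (one_sub_exp_neg_mul_rpow_le_expHead hp hp0.le ht)
  · filter_upwards [eventually_gt_atTop 0] with t ht using expHead_le hp hp0.le ht

lemma integrableOn_expTail_sub_expHead (hp : -1 < p) (hp0 : p < 0) :
    IntegrableOn (fun t => expTail p t - expHead p t) (Ioi 0) := by
  have h₁ : IntegrableOn (fun t => expTail p t - t ^ p) (Ioi 0) :=
    integrableOn_Ioi_deriv_of_nonpos (continuousWithinAt_expTail hp)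
      (fun _ ht => hasDerivAt_expTail hp ht)
      (fun _ ht => sub_nonpos.2 (expTail_le_rpow hp hp0.le ht)) (tendsto_expTail hp hp0)
  have h₂ : IntegrableOn (fun t => (1 - exp (-t)) * t ^ p - expHead p t) (Ioi 0) := by
    refine integrableOn_Ioi_deriv_of_nonpos
      (g := fun t => expHead p t - ∫ s in 0..t, exp (-s) * s ^ p)
      ((continuousWithinAt_expHead hp).sub
        (continuousWithinAt_integral_mul_rpow hp (φ := fun s => exp (-s)) (by fun_prop)))
      (fun t ht => ((hasDerivAt_expHead hp ht).sub
        (hasDerivAt_integral_mul_rpow hp (φ := fun s => exp (-s)) (by fun_prop) ht)).congr_deriv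
          (by ring))
      (fun t ht => sub_nonpos.2 (one_sub_exp_neg_mul_rpow_le_expHead hp hp0.le ht.out.le))
      ((tendsto_expHead hp hp0).sub (intervalIntegral_tendsto_integral_Ioi 0
        (integrableOn_exp_neg_mul_rpow hp) tendsto_id))
  exact ((h₁.add h₂).add (integrableOn_exp_neg_mul_rpow hp)).congr_fun
    (fun t _ => by simp only [Pi.add_apply]; ring) measurableSet_Ioi

end Exponent

section Psi

variable {H t : ℝ}

noncomputable def psiPrimitive (H t : ℝ) : ℝ :=
  -(Gamma (2 * H + 1) * exp (-t)) + 2 * H * (expTail (2 * H - 1) t + expHead (2 * H - 1) t)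

lemma psiH_eq (H t : ℝ) :
    psiH H t = Gamma (2 * H + 1) * exp (-t) +
      2 * H * (expTail (2 * H - 1) t - expHead (2 * H - 1) t) := rfl

lemma hasDerivAt_psiPrimitive (hH : 0 < H) (ht : 0 < t) :
    HasDerivAt (psiPrimitive H) (psiH H t) t := by
  have hp : -1 < 2 * H - 1 := by linarith
  have h := (((hasDerivAt_neg t).exp.const_mul (Gamma (2 * H + 1))).neg).add
    (((hasDerivAt_expTail hp ht).add (hasDerivAt_expHead hp ht)).const_mul (2 * H))
  exact h.congr_deriv (by rw [psiH_eq]; ring)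

lemma continuousWithinAt_psiPrimitive (hH : 0 < H) :
    ContinuousWithinAt (psiPrimitive H) (Ici 0) 0 := by
  have hp : -1 < 2 * H - 1 := by linarith
  exact ((continuous_exp.comp continuous_neg).continuousWithinAt.const_mul _).neg.add
    (((continuousWithinAt_expTail hp).add (continuousWithinAt_expHead hp)).const_mul _)

lemma psiPrimitive_zero (hH : 0 < H) : psiPrimitive H 0 = 0 := by
  rw [psiPrimitive, expTail_zero (by linarith), expHead_zero, sub_add_cancel,
    Gamma_add_one (by positivity)]
  simp

lemma tendsto_psiPrimitive (hH : 0 < H) (hH' : H < 1 / 2) :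
    Tendsto (psiPrimitive H) atTop (𝓝 0) := by
  have hp : -1 < 2 * H - 1 := by linarith
  have hp0 : 2 * H - 1 < 0 := by linarith
  have h := ((tendsto_exp_neg_atTop_nhds_zero.const_mul (Gamma (2 * H + 1))).neg).add
    (((tendsto_expTail hp hp0).add (tendsto_expHead hp hp0)).const_mul (2 * H))
  rwa [mul_zero, neg_zero, add_zero, mul_zero, add_zero] at h

lemma integrableOn_psiH (hH : 0 < H) (hH' : H < 1 / 2) : IntegrableOn (psiH H) (Ioi 0) :=
  ((integrableOn_exp_neg_Ioi 0).const_mul _).add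
    ((integrableOn_expTail_sub_expHead (by linarith) (by linarith)).const_mul (2 * H))

end Psi

/-- For every `H ∈ (0, 1/2)`, `∫₀^∞ ψ_H(t) dt = 0`; that is, `I_{1,H} = 0`. -/
theorem stmt15 (H : ℝ) (hH : H ∈ Set.Ioo (0:ℝ) (1/2)) :
    (∫ t in Set.Ioi (0:ℝ), psiH H t) = 0 := by
  obtain ⟨hH0, hH1⟩ := hH
  rw [integral_Ioi_of_hasDerivAt_of_tendsto (continuousWithinAt_psiPrimitive hH0)
    (fun _ ht => hasDerivAt_psiPrimitive hH0 ht) (integrableOn_psiH hH0 hH1)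
    (tendsto_psiPrimitive hH0 hH1), psiPrimitive_zero hH0, sub_zero]
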